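/- Under the nearest-neighbor GP factorization p(Y_1,…,Y_N) = Π_{i=1}^N p(Y_i | Y_{𝒩_i}) where 𝒩_i ⊆ {1,…,i−1} with |𝒩_i| ≤ ℓ, each conditional being Gaussian with linear mean in Y_{𝒩_i}, the resulting joint distribution is multivariate Gaussian and its precision matrix Λ satisfies Λ_{ij} = 0 whenever neither i ∈ 𝒩_j ∪ (∪_{m: j∈𝒩_m}𝒩_m ∪ {m}) nor symmetrically; in particular, each row of the Cholesky factor of Λ (in the given ordering) has at most ℓ+1 nonzero entries. -/
import Mathlib


open Matrix Finset

/-- Sparsity structure of the nearest-neighbor GP precision matrix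
`Λ = (I−B)ᵀ F⁻¹ (I−B)`, where `B` is strictly lower triangular with row `i` supported on
the neighbor set `𝒩_i ⊆ {1,…,i−1}` with `|𝒩_i| ≤ ℓ` and `F = diag(f)` with `f_i > 0`:
`Λ_{ij} = 0` unless `i = j`, `i ∈ 𝒩_j`, `j ∈ 𝒩_i`, or `i` and `j` are co-neighbors of a
common index `m`; and each row of the Cholesky factor `I − B` has at most `ℓ+1` nonzero
entries. -/
theorem stmt17 {N : ℕ} (ℓ : ℕ) (𝒩 : Fin N → Finset (Fin N))
    (hlower : ∀ i j, j ∈ 𝒩 i → j < i) (hcard : ∀ i, (𝒩 i).card ≤ ℓ)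
    (B : Matrix (Fin N) (Fin N) ℝ) (hB : ∀ i j, B i j ≠ 0 → j ∈ 𝒩 i)
    (f : Fin N → ℝ) (hf : ∀ i, 0 < f i) :
    (∀ i j : Fin N,
        ¬(i = j ∨ i ∈ 𝒩 j ∨ j ∈ 𝒩 i ∨ ∃ m : Fin N, i ∈ 𝒩 m ∧ j ∈ 𝒩 m) →
        (((1 : Matrix (Fin N) (Fin N) ℝ) - B)ᵀ * (Matrix.diagonal f)⁻¹ *
          ((1 : Matrix (Fin N) (Fin N) ℝ) - B)) i j = 0) ∧
      (∀ i : Fin N,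
        (Finset.univ.filter
          (fun j => ((1 : Matrix (Fin N) (Fin N) ℝ) - B) i j ≠ 0)).card ≤ ℓ + 1) := by
  have hIB : ∀ i j : Fin N, ((1 : Matrix (Fin N) (Fin N) ℝ) - B) i j ≠ 0 →
      i = j ∨ j ∈ 𝒩 i := by
    intro i j h
    by_cases hij : i = j
    · exact Or.inl hij
    · right
      apply hB
      intro hBij
      apply h
      simp [Matrix.sub_apply, Matrix.one_apply, hij, hBij]
  constructor
  · intro i j hne
    rw [Matrix.mul_assoc, Matrix.mul_apply]
    apply Finset.sum_eq_zero
    intro k _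
    rw [Matrix.transpose_apply, Matrix.mul_apply]
    rcases eq_or_ne (((1 : Matrix (Fin N) (Fin N) ℝ) - B) k i) 0 with h1 | h1
    · rw [h1, zero_mul]
    · rw [mul_eq_zero]
      right
      apply Finset.sum_eq_zero
      intro m _
      rcases eq_or_ne m k with rfl | hmk
      · rcases eq_or_ne (((1 : Matrix (Fin N) (Fin N) ℝ) - B) m j) 0 with h2 | h2
        · rw [h2, mul_zero]
        · exfalso
          apply hne
          rcases hIB m i h1 with rfl | hi <;> rcases hIB m j h2 with rfl | hj
          · exact Or.inl rfl
          · exact Or.inr (Or.inr (Or.inl hj))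
          · exact Or.inr (Or.inl hi)
          · exact Or.inr (Or.inr (Or.inr ⟨m, hi, hj⟩))
      · rw [Matrix.inv_diagonal, Matrix.diagonal_apply_ne _ hmk.symm, zero_mul]
  · intro i
    calc (Finset.univ.filter
          (fun j => ((1 : Matrix (Fin N) (Fin N) ℝ) - B) i j ≠ 0)).card
        ≤ (insert i (𝒩 i)).card := by
          apply Finset.card_le_card
          intro j hj
          simp only [Finset.mem_filter] at hj
          rcases hIB i j hj.2 with rfl | h
          · exact Finset.mem_insert_self _ _
          · exact Finset.mem_insert_of_mem h
      _ ≤ (𝒩 i).card + 1 := Finset.card_insert_le _ _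
      _ ≤ ℓ + 1 := by have := hcard i; omega
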